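/- arXiv:1004.4982 — 3 statements merged into one kernel-verified Lean document; each statement's English description precedes it below -/
import Mathlib

section
/- Let X, Y be nonempty sets, f : X → Y, τ a topology on Y, and 𝒳 a nonempty family of subsets of X. Then the attraction set (as)[X;Y;τ;f;𝒳] equals the set of y ∈ Y such that there exists an ultrafilter 𝒰 on X with 𝒳 ⊆ 𝒰 and f¹[𝒰] converging to y in τ. -/
/-! The tail filter of an admissible net is a proper filter containing `𝒳` along which `f`
converges, and any such filter can be refined to an ultrafilter. Conversely, a proper filter is
the tail filter of the net that picks a point in each of its members, directed by reverse
inclusion. -/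

open Filter Topology

/-- Attraction set defined via nets. -/
def attrSet {X Y : Type} [TopologicalSpace Y] (f : X → Y) (𝒳 : Set (Set X)) : Set Y :=
  {y | ∃ (D : Type) (r : D → D → Prop) (g : D → X),
    Nonempty D ∧ (∀ d, r d d) ∧ (∀ a b c, r a b → r b c → r a c) ∧
    (∀ a b, ∃ c, r a c ∧ r b c) ∧
    (∀ A ∈ 𝒳, ∃ d, ∀ e, r d e → g e ∈ A) ∧
    (∀ N ∈ nhds y, ∃ d, ∀ e, r d e → f (g e) ∈ N)}

section AttractionSet

variable {X Y : Type} [TopologicalSpace Y] {f : X → Y} {𝒳 : Set (Set X)} {y : Y}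

theorem exists_neBot_filter_of_mem_attrSet (hy : y ∈ attrSet f 𝒳) :
    ∃ F : Filter X, F.NeBot ∧ 𝒳 ⊆ F.sets ∧ Tendsto f F (𝓝 y) := by
  obtain ⟨D, r, g, hD, hrefl, htrans, hdir, h𝒳, hlim⟩ := hy
  let _ : Preorder D := { le := r, le_refl := hrefl, le_trans := htrans }
  have : IsDirectedOrder D := ⟨hdir⟩
  exact ⟨map g atTop, inferInstance, fun A hA => mem_atTop_sets.2 (h𝒳 A hA),
    fun N hN => mem_atTop_sets.2 (hlim N hN)⟩

theorem mem_attrSet_of_neBot_filter (F : Filter X) [F.NeBot] (h𝒳F : 𝒳 ⊆ F.sets)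
    (hF : Tendsto f F (𝓝 y)) : y ∈ attrSet f 𝒳 := by
  let g : {S : Set X // S ∈ F} → X := fun S => (nonempty_of_mem S.2).some
  have eventually_mem : ∀ A ∈ F, ∃ d : {S : Set X // S ∈ F}, ∀ e, e.1 ⊆ d.1 → g e ∈ A :=
    fun A hA => ⟨⟨A, hA⟩, fun e he => he (nonempty_of_mem e.2).some_mem⟩
  refine ⟨{S : Set X // S ∈ F}, fun a b => b.1 ⊆ a.1, g, ⟨⟨Set.univ, univ_mem⟩⟩,
    fun _ => subset_rfl, fun _ _ _ hab hbc => hbc.trans hab, fun a b => ?_,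
    fun A hA => eventually_mem A (h𝒳F hA), fun N hN => eventually_mem _ (hF hN)⟩
  exact ⟨⟨a.1 ∩ b.1, inter_mem a.2 b.2⟩, Set.inter_subset_left, Set.inter_subset_right⟩

end AttractionSet

theorem attrSet_eq_ultrafilter_description_general {X Y : Type}
    [TopologicalSpace Y] (f : X → Y) (𝒳 : Set (Set X)) :
    attrSet f 𝒳 =
      {y : Y | ∃ 𝒰 : Ultrafilter X, 𝒳 ⊆ (𝒰 : Filter X).sets ∧
        Filter.Tendsto f (𝒰 : Filter X) (nhds y)} := by
  ext y
  constructor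
  · intro hy
    obtain ⟨F, hF, h𝒳F, hlim⟩ := exists_neBot_filter_of_mem_attrSet hy
    exact ⟨Ultrafilter.of F, fun A hA => Ultrafilter.of_le F (h𝒳F hA),
      hlim.mono_left (Ultrafilter.of_le F)⟩
  · rintro ⟨𝒰, h𝒳𝒰, hlim⟩
    exact mem_attrSet_of_neBot_filter (𝒰 : Filter X) h𝒳𝒰 hlim

/-- the attraction set equals the set of limits of images of
ultrafilters on `X` containing the family `𝒳`. -/
theorem attrSet_eq_ultrafilter_description {X Y : Type} [Nonempty X] [Nonempty Y]
    [TopologicalSpace Y] (f : X → Y) (𝒳 : Set (Set X)) (h𝒳 : 𝒳.Nonempty) :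
    attrSet f 𝒳 =
      {y : Y | ∃ 𝒰 : Ultrafilter X, 𝒳 ⊆ (𝒰 : Filter X).sets ∧
        Filter.Tendsto f (𝒰 : Filter X) (nhds y)} :=
  attrSet_eq_ultrafilter_description_general f 𝒳
end

section
/- Let X, Y be nonempty sets, f : X → Y, τ a compact topology on Y, and 𝒳 a nonempty family of subsets of X such that the empty set is not a finite intersection of members of 𝒳. Then the attraction set (as)[X;Y;τ;f;𝒳] is nonempty. -/
open Filter Topology

/-! A compactness argument: the family `𝒳` generates a proper filter, some ultrafilter finer than
it is pushed by `f` to a convergent one, and the limit is reached by the net indexed by the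
members of that ultrafilter ordered by reverse inclusion, each mapped to one of its points. -/

theorem Filter.generate_neBot_of_finite_inter_nonempty {X : Type} [Nonempty X]
    {𝒳 : Set (Set X)}
    (hfip : ∀ s : Finset (Set X), s.Nonempty → ↑s ⊆ 𝒳 → ⋂₀ (↑s : Set (Set X)) ≠ ∅) :
    (generate 𝒳).NeBot := by
  refine generate_neBot_iff.mpr fun t ht htfin => ?_
  rcases t.eq_empty_or_nonempty with rfl | htne
  · simp
  · simpa [Set.nonempty_iff_ne_empty] using
      hfip htfin.toFinset (by simpa using htne) (by simpa using ht)

theorem mem_attrSet_of_tendsto {X Y : Type} [TopologicalSpace Y] {f : X → Y}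
    {𝒳 : Set (Set X)} {y : Y} {G : Filter X} [G.NeBot] (h𝒳 : ∀ A ∈ 𝒳, A ∈ G)
    (hy : Tendsto f G (𝓝 y)) : y ∈ attrSet f 𝒳 :=
  ⟨{S // S ∈ G}, fun S T => T.1 ⊆ S.1, fun S => (nonempty_of_mem S.2).some,
    ⟨⟨Set.univ, univ_mem⟩⟩,
    fun _ => subset_rfl,
    fun _ _ _ hab hbc => hbc.trans hab,
    fun S T => ⟨⟨S.1 ∩ T.1, inter_mem S.2 T.2⟩, Set.inter_subset_left, Set.inter_subset_right⟩,
    fun A hA => ⟨⟨A, h𝒳 A hA⟩, fun T hT => hT (nonempty_of_mem T.2).some_mem⟩,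
    fun N hN => ⟨⟨f ⁻¹' N, hy hN⟩, fun T hT => hT (nonempty_of_mem T.2).some_mem⟩⟩

theorem attrSet_nonempty_of_fip_general {X Y : Type} [Nonempty X]
    [TopologicalSpace Y] [CompactSpace Y] (f : X → Y) (𝒳 : Set (Set X))
    (hfip : ∀ s : Finset (Set X), s.Nonempty → ↑s ⊆ 𝒳 →
      ⋂₀ (↑s : Set (Set X)) ≠ (∅ : Set X)) :
    (attrSet f 𝒳).Nonempty := by
  have := generate_neBot_of_finite_inter_nonempty hfip
  obtain ⟨y, hy⟩ := exists_clusterPt_of_compactSpace (map f (generate 𝒳))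
  obtain ⟨U, hU, hUy⟩ := mapClusterPt_iff_ultrafilter.mp hy
  exact ⟨y, mem_attrSet_of_tendsto (fun A hA => hU (mem_generate_of_mem hA)) hUy⟩

/-- if `Y` is compact and `𝒳` has the finite intersection
property (no finite intersection of members of `𝒳` is empty), then the
attraction set is nonempty. -/
theorem attrSet_nonempty_of_fip {X Y : Type} [Nonempty X] [Nonempty Y]
    [TopologicalSpace Y] [CompactSpace Y] (f : X → Y) (𝒳 : Set (Set X))
    (hne : 𝒳.Nonempty)
    (hfip : ∀ s : Finset (Set X), s.Nonempty → ↑s ⊆ 𝒳 →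
      ⋂₀ (↑s : Set (Set X)) ≠ (∅ : Set X)) :
    (attrSet f 𝒳).Nonempty :=
  attrSet_nonempty_of_fip_general f 𝒳 hfip
end

section
/- Let E be a nonempty set and ℒ a π-system of subsets of E with ∅, E ∈ ℒ. Any two distinct ultrafilters 𝒰₁, 𝒰₂ of ℒ contain disjoint elements: there exist A ∈ 𝒰₁ and B ∈ 𝒰₂ with A ∩ B = ∅. -/
/-- A filter of the family `L` of subsets of `E`: a nonempty subfamily of `L`
consisting of nonempty sets, closed under binary intersection and upward
closed within `L`. -/
def IsLFilter {E : Type*} (L F : Set (Set E)) : Prop :=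
  F.Nonempty ∧ F ⊆ L ∧ (∅ : Set E) ∉ F ∧
  (∀ A ∈ F, ∀ B ∈ F, A ∩ B ∈ F) ∧
  (∀ A ∈ F, ∀ B ∈ L, A ⊆ B → B ∈ F)

/-- An ultrafilter of `L`: a maximal filter of `L`. -/
def IsLUltra {E : Type*} (L U : Set (Set E)) : Prop :=
  IsLFilter L U ∧ ∀ F : Set (Set E), IsLFilter L F → U ⊆ F → U = F

/-!
If no member of `U₁` is disjoint from a member of `U₂`, the members of `L` containing some
`A ∩ B` with `A ∈ U₁`, `B ∈ U₂` form a filter of `L` extending both; by maximality it equals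
both ultrafilters, so `U₁ = U₂`.
-/

namespace IsLFilter

variable {E : Type*} {L F₁ F₂ : Set (Set E)}

def sup (L F₁ F₂ : Set (Set E)) : Set (Set E) :=
  {C | C ∈ L ∧ ∃ A ∈ F₁, ∃ B ∈ F₂, A ∩ B ⊆ C}

theorem left_subset_sup (hF₁ : F₁ ⊆ L) (hF₂ : F₂.Nonempty) : F₁ ⊆ sup L F₁ F₂ := by
  obtain ⟨B, hB⟩ := hF₂
  exact fun A hA => ⟨hF₁ hA, A, hA, B, hB, Set.inter_subset_left⟩

theorem right_subset_sup (hF₁ : F₁.Nonempty) (hF₂ : F₂ ⊆ L) : F₂ ⊆ sup L F₁ F₂ := by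
  obtain ⟨A, hA⟩ := hF₁
  exact fun B hB => ⟨hF₂ hB, A, hA, B, hB, Set.inter_subset_right⟩

theorem isLFilter_sup (hinter : ∀ A ∈ L, ∀ B ∈ L, A ∩ B ∈ L)
    (hF₁ : IsLFilter L F₁) (hF₂ : IsLFilter L F₂)
    (hmeet : ∀ A ∈ F₁, ∀ B ∈ F₂, (A ∩ B).Nonempty) : IsLFilter L (sup L F₁ F₂) := by
  obtain ⟨⟨A, hA⟩, hsub₁, -, hint₁, -⟩ := hF₁
  obtain ⟨hne₂, -, -, hint₂, -⟩ := hF₂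
  refine ⟨⟨A, left_subset_sup hsub₁ hne₂ hA⟩, fun C hC => hC.1, ?_, ?_, ?_⟩
  · rintro ⟨-, A, hA, B, hB, hAB⟩
    exact (hmeet A hA B hB).ne_empty (Set.subset_empty_iff.mp hAB)
  · rintro C ⟨hC, A, hA, B, hB, hAB⟩ C' ⟨hC', A', hA', B', hB', hAB'⟩
    refine ⟨hinter C hC C' hC', A ∩ A', hint₁ A hA A' hA', B ∩ B', hint₂ B hB B' hB', ?_⟩
    exact Set.subset_inter (fun x hx => hAB ⟨hx.1.1, hx.2.1⟩) (fun x hx => hAB' ⟨hx.1.2, hx.2.2⟩)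
  · rintro C ⟨-, A, hA, B, hB, hAB⟩ D hD hCD
    exact ⟨hD, A, hA, B, hB, hAB.trans hCD⟩

end IsLFilter

theorem IsLUltra.eq_of_forall_inter_nonempty {E : Type*} {L U₁ U₂ : Set (Set E)}
    (hinter : ∀ A ∈ L, ∀ B ∈ L, A ∩ B ∈ L) (hU₁ : IsLUltra L U₁) (hU₂ : IsLUltra L U₂)
    (hmeet : ∀ A ∈ U₁, ∀ B ∈ U₂, (A ∩ B).Nonempty) : U₁ = U₂ := by
  obtain ⟨hF₁, hmax₁⟩ := hU₁
  obtain ⟨hF₂, hmax₂⟩ := hU₂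
  have ⟨hne₁, hsub₁, _⟩ := hF₁
  have ⟨hne₂, hsub₂, _⟩ := hF₂
  have hsup := IsLFilter.isLFilter_sup hinter hF₁ hF₂ hmeet
  calc U₁ = IsLFilter.sup L U₁ U₂ := hmax₁ _ hsup (IsLFilter.left_subset_sup hsub₁ hne₂)
    _ = U₂ := (hmax₂ _ hsup (IsLFilter.right_subset_sup hne₁ hsub₂)).symm

theorem distinct_ultrafilters_disjoint_general {E : Type*} (L : Set (Set E))
    (hinter : ∀ A ∈ L, ∀ B ∈ L, A ∩ B ∈ L)
    (U₁ U₂ : Set (Set E)) (hU₁ : IsLUltra L U₁) (hU₂ : IsLUltra L U₂)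
    (hne : U₁ ≠ U₂) :
    ∃ A ∈ U₁, ∃ B ∈ U₂, A ∩ B = (∅ : Set E) := by
  by_contra! hmeet
  exact hne (hU₁.eq_of_forall_inter_nonempty hinter hU₂ hmeet)

/-- two distinct ultrafilters of a π-system with zero and unit
contain disjoint elements. -/
theorem distinct_ultrafilters_disjoint {E : Type*} [Nonempty E] (L : Set (Set E))
    (hzero : (∅ : Set E) ∈ L) (hunit : (Set.univ : Set E) ∈ L)
    (hinter : ∀ A ∈ L, ∀ B ∈ L, A ∩ B ∈ L)
    (U₁ U₂ : Set (Set E)) (hU₁ : IsLUltra L U₁) (hU₂ : IsLUltra L U₂)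
    (hne : U₁ ≠ U₂) :
    ∃ A ∈ U₁, ∃ B ∈ U₂, A ∩ B = (∅ : Set E) :=
  distinct_ultrafilters_disjoint_general L hinter U₁ U₂ hU₁ hU₂ hne
end
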